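/- Let A be an associative unital ℝ-algebra, n a real number, and d, δ, x, y, Δ, N elements of A satisfying Δ·d = d·Δ, Δ·δ = δ·Δ, Δ·x − x·Δ = −2d, Δ·y − y·Δ = 2δ, and N·Δ − Δ·N = −2Δ. Define εD := d·(n·1 + 2N − 2·1) + x·Δ and ιD := −δ·(n·1 + 2N − 2·1) + y·Δ. Let M be a module over A and let ℓ be a natural number. Then: (i) if V ∈ M satisfies N·V = (ℓ − n/2 + 1)•V, then Δ^ℓ·(εD·V) = x·(Δ^{ℓ+1}·V) and Δ^ℓ·(ιD·V) = y·(Δ^{ℓ+1}·V); (ii) if U ∈ M satisfies N·U = (ℓ − n/2)•U, then εD·(Δ^ℓ·U) = Δ^{ℓ+1}·(x·U) and ιD·(Δ^ℓ·U) = Δ^{ℓ+1}·(y·U). Here Δ⁰ := 1. -/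

import Mathlib

/-- The operator `ε(𝔻) = d̃(n + 2∇_𝕏 − 2) + ε(𝕏)Δ̃` of Branson–Gover, modelled in
an abstract associative `ℝ`-algebra. -/
def epsD {A : Type*} [Ring A] [Algebra ℝ A] (n : ℝ) (d x Δ N : A) : A :=
  d * (n • (1 : A) + (2 : ℝ) • N - (2 : ℝ) • (1 : A)) + x * Δ

/-- The operator `ι(𝔻) = −δ̃(n + 2∇_𝕏 − 2) + ι(𝕏)Δ̃` of Branson–Gover, modelled in
an abstract associative `ℝ`-algebra. -/
def iotaD {A : Type*} [Ring A] [Algebra ℝ A] (n : ℝ) (δ y Δ N : A) : A :=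
  -(δ * (n • (1 : A) + (2 : ℝ) • N - (2 : ℝ) • (1 : A))) + y * Δ

/-!
If `Δ` commutes with `d` and `[Δ, x] = -2d`, then `Δ^k x Δ = x Δ^{k+1} - 2k d Δ^k`, and `Δ^k`
lowers the `N`-weight by `2k`. On a weight vector the factor `n + 2N - 2` of `ε(𝔻)` therefore
becomes exactly the scalar that cancels this commutator term. Since `ι(𝔻)` is `ε(𝔻)` with `d`
replaced by `-δ` (and `[Δ, y] = -2(-δ)`), the statements for `ι` are instances of those for `ε`.
-/

section Commutator

variable {A : Type*} [Ring A] {Δ a b : A}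

theorem pow_mul_mul_eq_of_mul_eq_add (hb : Commute Δ b) (ha : Δ * a = a * Δ + b) (k : ℕ) :
    Δ ^ k * (a * Δ) = a * Δ ^ (k + 1) + k • (b * Δ ^ k) := by
  induction k with
  | zero => simp [pow_succ]
  | succ k ih =>
    calc Δ ^ (k + 1) * (a * Δ) = Δ * (Δ ^ k * (a * Δ)) := by rw [pow_succ', mul_assoc]
      _ = (Δ * a) * Δ ^ (k + 1) + k • (b * Δ ^ (k + 1)) := by
        rw [ih, mul_add, mul_smul_comm, ← mul_assoc, ← mul_assoc, hb.eq, mul_assoc b, ← pow_succ']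
      _ = a * Δ ^ (k + 2) + (k + 1) • (b * Δ ^ (k + 1)) := by
        rw [ha, add_mul, mul_assoc, ← pow_succ', add_smul, one_smul, add_assoc, add_comm (b * _)]

theorem pow_succ_mul_eq_of_mul_eq_add (hb : Commute Δ b) (ha : Δ * a = a * Δ + b) (k : ℕ) :
    Δ ^ (k + 1) * a = a * Δ ^ (k + 1) + (k + 1) • (b * Δ ^ k) := by
  rw [pow_succ, mul_assoc, ha, mul_add, pow_mul_mul_eq_of_mul_eq_add hb ha, (hb.pow_left k).eq,
    add_smul, one_smul, add_assoc, ← pow_succ]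

end Commutator

section Weight

variable {R A M : Type*} [CommRing R] [Ring A] [Algebra R A] [AddCommGroup M] [Module R M]
  [Module A M] [IsScalarTower R A M]

theorem smul_pow_smul_of_smul_eq {N Δ : A} {r w : R} {v : M} (hN : N * Δ - Δ * N = r • Δ)
    (hv : N • v = w • v) (k : ℕ) : N • (Δ ^ k • v) = (w + k * r) • (Δ ^ k • v) := by
  induction k with
  | zero => simpa using hv
  | succ k ih =>
    calc N • Δ ^ (k + 1) • v = (Δ * N + r • Δ) • Δ ^ k • v := by
          rw [pow_succ', mul_smul, ← mul_smul, eq_add_of_sub_eq' hN]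
      _ = (w + (k + 1 : ℕ) * r) • Δ ^ (k + 1) • v := by
        rw [add_smul, mul_smul, ih, smul_comm Δ, smul_assoc, ← add_smul, pow_succ', mul_smul]
        congr 1
        push_cast
        ring

end Weight

section BransonGover

variable {A : Type*} [Ring A] [Algebra ℝ A] {n : ℝ} {d x Δ N : A}

theorem iotaD_eq_epsD_neg (n : ℝ) (δ y Δ N : A) : iotaD n δ y Δ N = epsD n (-δ) y Δ N := by
  rw [iotaD, epsD, neg_mul]

theorem pow_mul_smul_add_mul_eq (hd : Commute Δ d) (hx : Δ * x - x * Δ = -((2 : ℝ) • d))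
    (k : ℕ) : Δ ^ k * ((2 * k : ℝ) • d + x * Δ) = x * Δ ^ (k + 1) := by
  rw [mul_add, pow_mul_mul_eq_of_mul_eq_add (hd.smul_right _).neg_right (eq_add_of_sub_eq' hx),
    mul_smul_comm, (hd.pow_left k).eq, ← Nat.cast_smul_eq_nsmul ℝ]
  simp only [neg_mul, smul_mul_assoc]
  module

theorem smul_add_mul_mul_pow_eq (hd : Commute Δ d) (hx : Δ * x - x * Δ = -((2 : ℝ) • d))
    (k : ℕ) : (-(2 * k + 2 : ℝ) • d + x * Δ) * Δ ^ k = Δ ^ (k + 1) * x := by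
  rw [pow_succ_mul_eq_of_mul_eq_add (hd.smul_right _).neg_right (eq_add_of_sub_eq' hx), add_mul,
    mul_assoc, ← pow_succ', smul_mul_assoc, ← Nat.cast_smul_eq_nsmul ℝ]
  push_cast
  simp only [neg_mul, smul_mul_assoc]
  module

variable {M : Type*} [AddCommGroup M] [Module ℝ M] [Module A M] [IsScalarTower ℝ A M]

theorem epsD_smul_of_smul_eq {w : ℝ} {v : M} (hv : N • v = w • v) :
    epsD n d x Δ N • v = ((n + 2 * w - 2) • d + x * Δ) • v := by
  have hP : (n • (1 : A) + (2 : ℝ) • N - (2 : ℝ) • (1 : A)) • v = (n + 2 * w - 2) • v := by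
    simp only [sub_smul, add_smul, smul_assoc, one_smul, hv]
    module
  rw [epsD, add_smul, add_smul, mul_smul, hP, smul_comm, smul_assoc]

theorem pow_smul_epsD_smul (hd : Commute Δ d) (hx : Δ * x - x * Δ = -((2 : ℝ) • d)) {ℓ : ℕ}
    {V : M} (hV : N • V = ((ℓ : ℝ) - n / 2 + 1) • V) :
    Δ ^ ℓ • epsD n d x Δ N • V = x • Δ ^ (ℓ + 1) • V := by
  rw [epsD_smul_of_smul_eq hV, ← mul_smul, ← mul_smul,
    show n + 2 * (ℓ - n / 2 + 1) - 2 = 2 * ℓ by ring, pow_mul_smul_add_mul_eq hd hx]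

theorem epsD_smul_pow_smul (hd : Commute Δ d) (hx : Δ * x - x * Δ = -((2 : ℝ) • d))
    (hN : N * Δ - Δ * N = -((2 : ℝ) • Δ)) {ℓ : ℕ} {U : M} (hU : N • U = ((ℓ : ℝ) - n / 2) • U) :
    epsD n d x Δ N • Δ ^ ℓ • U = Δ ^ (ℓ + 1) • x • U := by
  have hΔU := smul_pow_smul_of_smul_eq (r := -2) (by rw [hN, neg_smul]) hU ℓ
  rw [epsD_smul_of_smul_eq hΔU, ← mul_smul, ← mul_smul,
    show n + 2 * (ℓ - n / 2 + ℓ * -2) - 2 = -(2 * ℓ + 2) by ring,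
    smul_add_mul_mul_pow_eq hd hx]

end BransonGover

/-- Lemma 4.1 of Branson–Gover: for `V` of weight `ℓ − n/2 + 1` one has
`Δ̃^ℓ ε(𝔻) V = ε(𝕏) Δ̃^{ℓ+1} V` and `Δ̃^ℓ ι(𝔻) V = ι(𝕏) Δ̃^{ℓ+1} V`, and for `U`
of weight `ℓ − n/2` one has `ε(𝔻) Δ̃^ℓ U = Δ̃^{ℓ+1} ε(𝕏) U` and
`ι(𝔻) Δ̃^ℓ U = Δ̃^{ℓ+1} ι(𝕏) U`. -/
theorem stmt_15
    {A : Type*} [Ring A] [Algebra ℝ A]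
    (n : ℝ) (d δ x y Δ N : A)
    (h₁ : Δ * d = d * Δ) (h₂ : Δ * δ = δ * Δ)
    (h₃ : Δ * x - x * Δ = -((2 : ℝ) • d))
    (h₄ : Δ * y - y * Δ = (2 : ℝ) • δ)
    (h₅ : N * Δ - Δ * N = -((2 : ℝ) • Δ))
    (M : Type*) [AddCommGroup M] [Module ℝ M] [Module A M] [IsScalarTower ℝ A M]
    (ℓ : ℕ) :
    (∀ V : M, N • V = ((ℓ : ℝ) - n / 2 + 1) • V →
      (Δ ^ ℓ) • (epsD n d x Δ N • V) = x • ((Δ ^ (ℓ + 1)) • V) ∧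
      (Δ ^ ℓ) • (iotaD n δ y Δ N • V) = y • ((Δ ^ (ℓ + 1)) • V)) ∧
    (∀ U : M, N • U = ((ℓ : ℝ) - n / 2) • U →
      epsD n d x Δ N • ((Δ ^ ℓ) • U) = (Δ ^ (ℓ + 1)) • (x • U) ∧
      iotaD n δ y Δ N • ((Δ ^ ℓ) • U) = (Δ ^ (ℓ + 1)) • (y • U)) := by
  have hδ : Commute Δ (-δ) := Commute.neg_right h₂
  have hy : Δ * y - y * Δ = -((2 : ℝ) • -δ) := by rw [h₄, smul_neg, neg_neg]
  rw [iotaD_eq_epsD_neg]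
  exact ⟨fun V hV => ⟨pow_smul_epsD_smul h₁ h₃ hV, pow_smul_epsD_smul hδ hy hV⟩,
    fun U hU => ⟨epsD_smul_pow_smul h₁ h₃ h₅ hU, epsD_smul_pow_smul hδ hy h₅ hU⟩⟩
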